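/- arXiv:math/0702393 — 9 statements merged into one kernel-verified Lean document; each statement's English description precedes it below -/
import Mathlib

section
/- The family (Q_φ), indexed by all states φ : E → Σₙ, is a basis of R_E as a ℂ-vector space; in particular dim_ℂ R_E = n^{|E|}. -/
/-
Each `q β` is the Lagrange basis polynomial of the node set `S`, and `w'` is a nonzero multiple of
the nodal polynomial `∏ α ∈ S, (X - C α)`; so modulo `w'` every polynomial `p` is congruent to its
interpolant `∑ β, p(β) q β`. Applying this in each variable expands every monomial of `R_E` in the
`Q_φ`, so they span. Conversely, evaluation at a point `ψ ∈ S^E` kills the ideal, hence is a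
character of `R_E`, and it sends `Q_φ` to `δ_{φψ}`; this gives linear independence.
-/

open Polynomial

/-- The ring `R_E = ℂ[X_e : e ∈ E] / (w'(X_e) : e ∈ E)`. -/
noncomputable abbrev stateRing (w : Polynomial ℂ) (E : Type) :=
  MvPolynomial E ℂ ⧸
    Ideal.span (Set.range fun e : E =>
      Polynomial.aeval (MvPolynomial.X e : MvPolynomial E ℂ) (derivative w))

/-- The element `Q_φ = ∏_{e∈E} q_{φ(e)}(X_e)` of `R_E` associated to a state
`φ : E → Σₙ = S`. -/
noncomputable def Qstate (w : Polynomial ℂ) (q : ℂ → Polynomial ℂ) (E : Type) [Fintype E]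
    (S : Finset ℂ) (φ : E → {x : ℂ // x ∈ S}) : stateRing w E :=
  Ideal.Quotient.mk _
    (∏ e : E, Polynomial.aeval (MvPolynomial.X e : MvPolynomial E ℂ) (q (φ e)))

open Lagrange

namespace Lagrange

variable {F ι : Type*} [Field F] [DecidableEq ι] {s : Finset ι} {v : ι → F}

theorem interpolate_eval_eq_modByMonic_nodal (hvs : Set.InjOn v s) (p : F[X]) :
    interpolate s v (fun i => p.eval (v i)) = p %ₘ nodal s v := by
  refine (eq_interpolate_of_eval_eq _ hvs ?_ fun i hi => ?_).symm
  · rw [← degree_nodal (v := v)]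
    exact degree_modByMonic_lt p nodal_monic
  · conv_rhs => rw [← modByMonic_add_div p (nodal s v)]
    rw [eval_add, eval_mul, eval_nodal_at_node hi, zero_mul, add_zero]

theorem nodal_dvd_sub_interpolate (hvs : Set.InjOn v s) (p : F[X]) :
    nodal s v ∣ p - interpolate s v (fun i => p.eval (v i)) := by
  rw [interpolate_eval_eq_modByMonic_nodal hvs]
  exact ⟨p /ₘ nodal s v, by rw [sub_eq_iff_eq_add', modByMonic_add_div]⟩

theorem eq_basis_of_X_sub_C_mul_eq [DecidableEq F] {S : Finset F} {β c : F} {r : F[X]}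
    (hβ : β ∈ S) (hc : c ≠ 0)
    (h : (X - C β) * (C (c * ∏ α ∈ S.erase β, (β - α)) * r) = C c * nodal S id) :
    r = Lagrange.basis S id β := by
  have hP : ∏ α ∈ S.erase β, (β - α) ≠ 0 :=
    Finset.prod_ne_zero_iff.2 fun α hα => sub_ne_zero.2 (Finset.ne_of_mem_erase hα).symm
  rw [nodal_eq_mul_nodal_erase hβ, mul_left_comm (C c)] at h
  have h' := mul_left_cancel₀ (X_sub_C_ne_zero β) h
  rw [basis_eq_prod_sub_inv_mul_nodal_div hβ, ← nodal_erase_eq_nodal_div hβ, nodalWeight,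
    Finset.prod_inv_distrib]
  calc r = C (c * ∏ α ∈ S.erase β, (β - α))⁻¹ * (C (c * ∏ α ∈ S.erase β, (β - α)) * r) := by
        rw [← mul_assoc, ← C_mul, inv_mul_cancel₀ (mul_ne_zero hc hP), C_1, one_mul]
    _ = _ := by
        rw [h', ← mul_assoc, ← C_mul, mul_inv, mul_right_comm, inv_mul_cancel₀ hc, one_mul]
        rfl

theorem eval_basis_id [DecidableEq F] {S : Finset F} {α β : F} (hα : α ∈ S) (hβ : β ∈ S) :
    (Lagrange.basis S id β).eval α = if β = α then 1 else 0 := by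
  split_ifs with h
  · subst h; exact eval_basis_self (v := id) (Set.injOn_id _) hβ
  · exact eval_basis_of_ne (v := id) h hα

end Lagrange

section StateRing

variable {w : ℂ[X]} {E : Type} {S : Finset ℂ} {q : ℂ → ℂ[X]}

noncomputable def coordHom (w : ℂ[X]) (E : Type) (e : E) : ℂ[X] →ₐ[ℂ] stateRing w E :=
  (Ideal.Quotient.mkₐ ℂ _).comp (aeval (MvPolynomial.X e))

theorem coordHom_derivative (e : E) : coordHom w E e (derivative w) = 0 :=
  Ideal.Quotient.eq_zero_iff_mem.2 (Ideal.subset_span ⟨e, rfl⟩)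

theorem Qstate_eq_prod [Fintype E] (φ : E → S) :
    Qstate w q E S φ = ∏ e, coordHom w E e (q (φ e)) :=
  map_prod _ _ _

theorem coordHom_eq_sum (hdvd : derivative w ∣ nodal S id)
    (hq : ∀ β ∈ S, q β = Lagrange.basis S id β) (e : E) (p : ℂ[X]) :
    coordHom w E e p = ∑ β : S, p.eval (β : ℂ) • coordHom w E e (q β) := by
  obtain ⟨g, hg⟩ := hdvd.trans (nodal_dvd_sub_interpolate (Set.injOn_id _) p)
  rw [congrArg (coordHom w E e) (sub_eq_iff_eq_add'.1 hg), map_add, map_mul,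
    coordHom_derivative, zero_mul, add_zero, interpolate_apply, map_sum, ← Finset.sum_coe_sort S]
  refine Finset.sum_congr rfl fun β _ => ?_
  rw [C_mul', map_smul, hq β β.2]
  rfl

variable [Fintype E]

theorem prod_coordHom_eq_sum_Qstate [DecidableEq E] (hdvd : derivative w ∣ nodal S id)
    (hq : ∀ β ∈ S, q β = Lagrange.basis S id β) (p : E → ℂ[X]) :
    ∏ e, coordHom w E e (p e) = ∑ φ : E → S, (∏ e, (p e).eval (φ e : ℂ)) • Qstate w q E S φ := by
  rw [Finset.prod_congr rfl fun e _ => coordHom_eq_sum hdvd hq e (p e), Fintype.prod_sum]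
  simp_rw [Finset.prod_smul, Qstate_eq_prod]

theorem span_range_Qstate (hdvd : derivative w ∣ nodal S id)
    (hq : ∀ β ∈ S, q β = Lagrange.basis S id β) :
    Submodule.span ℂ (Set.range (Qstate w q E S)) = ⊤ := by
  classical
  refine Submodule.eq_top_iff'.2 fun z => ?_
  obtain ⟨P, rfl⟩ := Ideal.Quotient.mkₐ_surjective ℂ _ z
  induction P using MvPolynomial.induction_on' with
  | add P₁ P₂ h₁ h₂ => rw [map_add]; exact Submodule.add_mem _ h₁ h₂
  | monomial d a =>
    have hmono : Ideal.Quotient.mkₐ ℂ _ (MvPolynomial.monomial d a)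
        = a • ∏ e, coordHom w E e (X ^ d e) := by
      simp [coordHom, MvPolynomial.monomial_eq, Finsupp.prod_fintype, MvPolynomial.C_mul',
        map_prod]
    rw [hmono, prod_coordHom_eq_sum_Qstate hdvd hq]
    exact Submodule.smul_mem _ _ (Submodule.sum_mem _ fun φ _ =>
      Submodule.smul_mem _ _ (Submodule.subset_span ⟨φ, rfl⟩))

end StateRing

section Evaluation

variable {w : ℂ[X]} {E : Type}

noncomputable def evalAt (x : E → ℂ) (hx : ∀ e, (derivative w).IsRoot (x e)) :
    stateRing w E →ₐ[ℂ] ℂ :=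
  Ideal.Quotient.liftₐ _ (MvPolynomial.aeval x) fun _ hP => by
    refine RingHom.mem_ker.1 ((Ideal.span_le (I := RingHom.ker (MvPolynomial.aeval x))).2 ?_ hP)
    rintro _ ⟨e, rfl⟩
    simpa [← aeval_algHom_apply] using hx e

theorem evalAt_coordHom (x : E → ℂ) (hx : ∀ e, (derivative w).IsRoot (x e)) (e : E)
    (p : ℂ[X]) : evalAt x hx (coordHom w E e p) = p.eval (x e) := by
  rw [evalAt, coordHom, ← AlgHom.comp_apply, ← AlgHom.comp_assoc, Ideal.Quotient.liftₐ_comp,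
    AlgHom.comp_apply, ← aeval_algHom_apply, MvPolynomial.aeval_X, coe_aeval_eq_eval]

variable [Fintype E] {S : Finset ℂ} {q : ℂ → ℂ[X]}

theorem evalAt_Qstate (hroot : ∀ α ∈ S, (derivative w).IsRoot α)
    (hq : ∀ β ∈ S, q β = Lagrange.basis S id β) (φ ψ : E → S) :
    evalAt (fun e => ψ e) (fun e => hroot _ (ψ e).2) (Qstate w q E S φ)
      = if φ = ψ then 1 else 0 := by
  classical
  simp_rw [Qstate_eq_prod, map_prod, evalAt_coordHom, fun e => hq _ (φ e).2,
    fun e => eval_basis_id (ψ e).2 (φ e).2, Fintype.prod_boole, funext_iff, Subtype.ext_iff]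

theorem linearIndependent_Qstate (hroot : ∀ α ∈ S, (derivative w).IsRoot α)
    (hq : ∀ β ∈ S, q β = Lagrange.basis S id β) :
    LinearIndependent ℂ (Qstate w q E S) := by
  classical
  let ev : stateRing w E →ₗ[ℂ] (E → S) → ℂ := LinearMap.pi fun ψ =>
    (evalAt (fun e => ψ e) fun e => hroot _ (ψ e).2).toLinearMap
  refine LinearIndependent.of_comp ev ?_
  convert (Pi.basisFun ℂ (E → S)).linearIndependent
  ext φ ψ
  simp [ev, evalAt_Qstate hroot hq, Pi.single_apply, eq_comm]

end Evaluation

theorem stmt_6_general (n : ℕ) (w : Polynomial ℂ) (S : Finset ℂ) (hcard : S.card = n)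
    (hder : derivative w = C ((n : ℂ) + 1) * ∏ α ∈ S, (X - C α))
    (q : ℂ → Polynomial ℂ)
    (hq : ∀ β ∈ S,
      (X - C β) * (C (((n : ℂ) + 1) * ∏ α ∈ S.erase β, (β - α)) * q β) = derivative w)
    (E : Type) [Fintype E] :
    (∃ b : Module.Basis (E → {x : ℂ // x ∈ S}) ℂ (stateRing w E),
      ∀ φ : E → {x : ℂ // x ∈ S}, b φ = Qstate w q E S φ) ∧
    Module.finrank ℂ (stateRing w E) = n ^ Fintype.card E := by
  classical
  have hnodal : derivative w = C ((n : ℂ) + 1) * nodal S id := by rw [hder, nodal_eq]; rfl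
  have hq' : ∀ β ∈ S, q β = Lagrange.basis S id β := fun β hβ =>
    eq_basis_of_X_sub_C_mul_eq hβ (Nat.cast_add_one_ne_zero n) ((hq β hβ).trans hnodal)
  have hroot : ∀ α ∈ S, (derivative w).IsRoot α := fun α hα =>
    IsRoot.dvd (eval_nodal_at_node (v := id) hα) (hnodal ▸ dvd_mul_left _ _)
  have hdvd : derivative w ∣ nodal S id :=
    hnodal ▸ (isUnit_C.2 (Nat.cast_add_one_ne_zero n).isUnit).mul_left_dvd.2 dvd_rfl
  let b := Module.Basis.mk (linearIndependent_Qstate hroot hq')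
    (span_range_Qstate (E := E) hdvd hq').ge
  refine ⟨⟨b, Module.Basis.mk_apply _ _⟩, ?_⟩
  simp [Module.finrank_eq_card_basis b, hcard]

/-- The family `(Q_φ)`, indexed by all states `φ : E → Σₙ`, is a basis of
`R_E` as a `ℂ`-vector space; in particular `dim_ℂ R_E = n^{|E|}`. -/
theorem stmt_6 (n : ℕ) (hn : 1 ≤ n) (w : Polynomial ℂ) (hw : w.Monic)
    (hdeg : w.natDegree = n + 1) (S : Finset ℂ) (hcard : S.card = n)
    (hder : derivative w = C ((n : ℂ) + 1) * ∏ α ∈ S, (X - C α))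
    (q : ℂ → Polynomial ℂ)
    (hq : ∀ β ∈ S,
      (X - C β) * (C (((n : ℂ) + 1) * ∏ α ∈ S.erase β, (β - α)) * q β) = derivative w)
    (E : Type) [Fintype E] [DecidableEq E] :
    (∃ b : Module.Basis (E → {x : ℂ // x ∈ S}) ℂ (stateRing w E),
      ∀ φ : E → {x : ℂ // x ∈ S}, b φ = Qstate w q E S φ) ∧
    Module.finrank ℂ (stateRing w E) = n ^ Fintype.card E :=
  stmt_6_general n w S hcard hder q hq E
end

section
/- Let ψ ∈ Σₙ be a root of w'. Then in the quotient ring ℂ[x₁,x₂]/(w'(x₁), w'(x₂)) one has the identity ((w'(x₁)−w'(x₂))/(x₁−x₂)) · (w'(x₂)/(x₂−ψ)) = (w'(x₁)/(x₁−ψ)) · (w'(x₂)/(x₂−ψ)), where (w'(x₁)−w'(x₂))/(x₁−x₂) denotes the exact polynomial quotient in ℂ[x₁,x₂] and w'(x_i)/(x_i−ψ) denotes the exact quotient in ℂ[x_i]. -/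
open Polynomial

/-- Let `ψ ∈ Σₙ` be a root of `w'`. Then in the quotient ring
`ℂ[x₁,x₂]/(w'(x₁), w'(x₂))` one has
`((w'(x₁)−w'(x₂))/(x₁−x₂)) · (w'(x₂)/(x₂−ψ)) = (w'(x₁)/(x₁−ψ)) · (w'(x₂)/(x₂−ψ))`,
with the exact polynomial quotients encoded by `hq12` and `hq1`.
(Variables: `x₁ = X 0`, `x₂ = X 1`.) -/
theorem stmt_9 (n : ℕ) (hn : 1 ≤ n) (w : Polynomial ℂ) (hw : w.Monic)
    (hdeg : w.natDegree = n + 1) (S : Finset ℂ) (hcard : S.card = n)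
    (hder : derivative w = C ((n : ℂ) + 1) * ∏ α ∈ S, (X - C α))
    (ψ : ℂ) (hψ : ψ ∈ S)
    (q12 : MvPolynomial (Fin 2) ℂ)
    (hq12 : (MvPolynomial.X 0 - MvPolynomial.X 1) * q12 =
      Polynomial.aeval (MvPolynomial.X 0 : MvPolynomial (Fin 2) ℂ) (derivative w) -
        Polynomial.aeval (MvPolynomial.X 1 : MvPolynomial (Fin 2) ℂ) (derivative w))
    (q1 : Polynomial ℂ) (hq1 : (X - C ψ) * q1 = derivative w) :
    Ideal.Quotient.mk
        (Ideal.span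
          {Polynomial.aeval (MvPolynomial.X 0 : MvPolynomial (Fin 2) ℂ) (derivative w),
           Polynomial.aeval (MvPolynomial.X 1 : MvPolynomial (Fin 2) ℂ) (derivative w)})
        q12 *
      Ideal.Quotient.mk _
        (Polynomial.aeval (MvPolynomial.X 1 : MvPolynomial (Fin 2) ℂ) q1) =
    Ideal.Quotient.mk _
        (Polynomial.aeval (MvPolynomial.X 0 : MvPolynomial (Fin 2) ℂ) q1) *
      Ideal.Quotient.mk _
        (Polynomial.aeval (MvPolynomial.X 1 : MvPolynomial (Fin 2) ℂ) q1) := by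
  set W1 : MvPolynomial (Fin 2) ℂ := Polynomial.aeval (MvPolynomial.X 0 : MvPolynomial (Fin 2) ℂ) (derivative w) with hW1
  set W2 : MvPolynomial (Fin 2) ℂ := Polynomial.aeval (MvPolynomial.X 1 : MvPolynomial (Fin 2) ℂ) (derivative w) with hW2
  set Q1 : MvPolynomial (Fin 2) ℂ := Polynomial.aeval (MvPolynomial.X 0 : MvPolynomial (Fin 2) ℂ) q1 with hQ1
  set Q2 : MvPolynomial (Fin 2) ℂ := Polynomial.aeval (MvPolynomial.X 1 : MvPolynomial (Fin 2) ℂ) q1 with hQ2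
  have h0 : ((MvPolynomial.X 0 : MvPolynomial (Fin 2) ℂ) - MvPolynomial.X 1) ≠ 0 := by
    intro h
    have := sub_eq_zero.mp h
    have h01 : (0 : Fin 2) = 1 := MvPolynomial.X_injective this
    exact absurd h01 (by decide)
  have h1 : ((MvPolynomial.X 0 : MvPolynomial (Fin 2) ℂ) - MvPolynomial.C ψ) * Q1 = W1 := by
    have := congrArg (Polynomial.aeval (MvPolynomial.X 0 : MvPolynomial (Fin 2) ℂ)) hq1
    simpa [MvPolynomial.algebraMap_eq] using this
  have h2 : ((MvPolynomial.X 1 : MvPolynomial (Fin 2) ℂ) - MvPolynomial.C ψ) * Q2 = W2 := by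
    have := congrArg (Polynomial.aeval (MvPolynomial.X 1 : MvPolynomial (Fin 2) ℂ)) hq1
    simpa [MvPolynomial.algebraMap_eq] using this
  have hd : ((MvPolynomial.X 0 : MvPolynomial (Fin 2) ℂ) - MvPolynomial.X 1) ∣ (Q1 - Q2) := by
    have := Polynomial.sub_dvd_eval_sub (MvPolynomial.X 0 : MvPolynomial (Fin 2) ℂ) (MvPolynomial.X 1)
      (q1.map (algebraMap ℂ (MvPolynomial (Fin 2) ℂ)))
    simpa [hQ1, hQ2, Polynomial.aeval_def, Polynomial.eval_map] using this
  obtain ⟨r, hr⟩ := hd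
  have hkey : q12 * Q2 - Q1 * Q2 = r * W2 := by
    apply mul_left_cancel₀ h0
    linear_combination Q2 * hq12 - Q2 * h1 + Q1 * h2 + W2 * hr
  rw [← map_mul, ← map_mul, Ideal.Quotient.eq, hkey]
  exact Ideal.mem_span_pair.mpr ⟨0, r, by ring⟩
end

section
/- In ℂ[x₁,x₂,x₃,x₄], the polynomial u₁ + x₃·u₂ − π₂₄ is divisible by (x₁ − x₃). -/
open MvPolynomial

private noncomputable def φ11 : MvPolynomial (Fin 4) ℂ →ₐ[ℂ] MvPolynomial (Fin 4) ℂ :=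
  aeval ![X 2, X 1, X 2, X 3]

private lemma dvd_sub_phi (f : MvPolynomial (Fin 4) ℂ) :
    (X 0 - X 2) ∣ f - φ11 f := by
  induction f using MvPolynomial.induction_on with
  | C a => simp [φ11]
  | add f g hf hg =>
    rw [map_add]
    have : f + g - (φ11 f + φ11 g) = (f - φ11 f) + (g - φ11 g) := by ring
    rw [this]; exact dvd_add hf hg
  | mul_X f i hf =>
    rw [map_mul]
    have key : f * X i - φ11 f * φ11 (X i) =
        (f - φ11 f) * X i + φ11 f * (X i - φ11 (X i)) := by ring
    rw [key]
    refine dvd_add (Dvd.dvd.mul_right hf _) (Dvd.dvd.mul_left ?_ _)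
    fin_cases i <;> simp [φ11]

private lemma phi_aeval (a b : MvPolynomial (Fin 4) ℂ) (p : MvPolynomial (Fin 2) ℂ) :
    φ11 (aeval ![a, b] p) = aeval ![φ11 a, φ11 b] p := by
  rw [comp_aeval_apply]
  congr 1
  ext i
  fin_cases i <;> simp

private lemma phi_paeval (a : MvPolynomial (Fin 4) ℂ) (w : Polynomial ℂ) :
    φ11 (Polynomial.aeval a w) = Polynomial.aeval (φ11 a) w := by
  rw [Polynomial.aeval_algHom_apply]

/-- In `ℂ[x₁,x₂,x₃,x₄]`, the polynomial `u₁ + x₃·u₂ − π₂₄` is divisible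
by `(x₁ − x₃)`, where `u₁`, `u₂`, `π₂₄` are the exact polynomial quotients described in the
context (encoded by the hypotheses `hu₁`, `hu₂`, `hπ₂₄`).
(Variables: `x₁ = X 0`, `x₂ = X 1`, `x₃ = X 2`, `x₄ = X 3`.) -/
theorem stmt_11 (w : Polynomial ℂ) (p : MvPolynomial (Fin 2) ℂ)
    (hp : aeval ![(X 0 : MvPolynomial (Fin 2) ℂ) + X 1, X 0 * X 1] p =
      Polynomial.aeval (X 0 : MvPolynomial (Fin 2) ℂ) w +
        Polynomial.aeval (X 1 : MvPolynomial (Fin 2) ℂ) w)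
    (u₁ u₂ π₂₄ : MvPolynomial (Fin 4) ℂ)
    (hu₁ : (X 0 + X 1 - X 2 - X 3) * u₁ =
      aeval ![(X 0 : MvPolynomial (Fin 4) ℂ) + X 1, X 0 * X 1] p -
        aeval ![(X 2 : MvPolynomial (Fin 4) ℂ) + X 3, X 0 * X 1] p)
    (hu₂ : (X 0 * X 1 - X 2 * X 3) * u₂ =
      aeval ![(X 2 : MvPolynomial (Fin 4) ℂ) + X 3, X 0 * X 1] p -
        aeval ![(X 2 : MvPolynomial (Fin 4) ℂ) + X 3, X 2 * X 3] p)
    (hπ₂₄ : (X 1 - X 3) * π₂₄ =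
      Polynomial.aeval (X 1 : MvPolynomial (Fin 4) ℂ) w -
        Polynomial.aeval (X 3 : MvPolynomial (Fin 4) ℂ) w) :
    (X 0 - X 2) ∣ (u₁ + X 2 * u₂ - π₂₄) := by
  -- Specialize `hp` at pairs of variables
  have hp' : ∀ a b : MvPolynomial (Fin 4) ℂ,
      aeval ![a + b, a * b] p = Polynomial.aeval a w + Polynomial.aeval b w := by
    intro a b
    have h := congrArg (aeval ![a, b] : MvPolynomial (Fin 2) ℂ →ₐ[ℂ] MvPolynomial (Fin 4) ℂ) hp
    rw [comp_aeval_apply, map_add, ← Polynomial.aeval_algHom_apply,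
      ← Polynomial.aeval_algHom_apply, aeval_X, aeval_X] at h
    have hv : (fun i => (aeval ![a, b])
        (![(X 0 : MvPolynomial (Fin 2) ℂ) + X 1, X 0 * X 1] i)) = ![a + b, a * b] := by
      funext i; fin_cases i <;> simp
    rwa [hv] at h
  -- Apply the substitution x₁ ↦ x₃ to the hypotheses
  have h1 := congrArg φ11 hu₁
  have h2 := congrArg φ11 hu₂
  have h3 := congrArg φ11 hπ₂₄
  simp only [map_mul, map_sub, map_add, phi_aeval, phi_paeval] at h1 h2 h3
  have eX : ∀ i : Fin 4, φ11 (X i) = ![X 2, X 1, X 2, X 3] i := fun i => aeval_X _ i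
  have e0 : φ11 (X 0) = (X 2 : MvPolynomial (Fin 4) ℂ) := eX 0
  have e1 : φ11 (X 1) = (X 1 : MvPolynomial (Fin 4) ℂ) := eX 1
  have e2 : φ11 (X 2) = (X 2 : MvPolynomial (Fin 4) ℂ) := eX 2
  have e3 : φ11 (X 3) = (X 3 : MvPolynomial (Fin 4) ℂ) := eX 3
  simp only [e0, e1, e2, e3] at h1 h2 h3
  -- Show the image of the target under φ11 is zero
  have hx : (X 1 : MvPolynomial (Fin 4) ℂ) - X 3 ≠ 0 := by
    intro h
    have := sub_eq_zero.mp h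
    have := MvPolynomial.X_injective this
    exact absurd this (by decide)
  have hzero : φ11 u₁ + X 2 * φ11 u₂ - φ11 π₂₄ = 0 := by
    apply mul_left_cancel₀ hx
    rw [mul_zero]
    have expand : (X 1 - X 3) * (φ11 u₁ + X 2 * φ11 u₂ - φ11 π₂₄) =
        (X 2 + X 1 - X 2 - X 3) * φ11 u₁ + (X 2 * X 1 - X 2 * X 3) * φ11 u₂
          - (X 1 - X 3) * φ11 π₂₄ := by ring
    rw [expand, h1, h2, h3, hp' (X 2) (X 1), hp' (X 2) (X 3)]
    ring
  have := dvd_sub_phi (u₁ + X 2 * u₂ - π₂₄)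
  simp only [map_add, map_sub, map_mul, e2] at this
  rw [hzero, sub_zero] at this
  exact this
end

section
/- In ℂ[x₁,x₂,x₃,x₄] one has the identity (x₁ − x₃)·(u₁ + x₂·u₂ − π₁₃) + (x₂ − x₄)·(u₁ + x₃·u₂ − π₂₄) = 0. (Equivalently, the polynomial a = (u₁ + x₃u₂ − π₂₄)/(x₁ − x₃) also equals −(u₁ + x₂u₂ − π₁₃)/(x₂ − x₄).) -/
open MvPolynomial

/-! Writing `s = x₁ + x₂ − x₃ − x₄` and `q = x₁x₂ − x₃x₄`, the left-hand side regroups as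
`s·u₁ + q·u₂ − (x₁ − x₃)·π₁₃ − (x₂ − x₄)·π₂₄`, because `(x₁ − x₃) + (x₂ − x₄) = s` and
`(x₁ − x₃)·x₂ + (x₂ − x₄)·x₃ = q`. By the defining equations this is the telescoping sum
`(p(x₁+x₂, x₁x₂) − p(x₃+x₄, x₁x₂)) + (p(x₃+x₄, x₁x₂) − p(x₃+x₄, x₃x₄)) − (w(x₁) − w(x₃)) − (w(x₂) − w(x₄))`,
which vanishes since `p(a+b, ab) = w(a) + w(b)`. -/

theorem aeval_add_mul_of_aeval_X_add_X_mul_X {R S : Type*} [CommSemiring R] [CommSemiring S]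
    [Algebra R S] {w : Polynomial R} {p : MvPolynomial (Fin 2) R}
    (hp : aeval ![(X 0 : MvPolynomial (Fin 2) R) + X 1, X 0 * X 1] p =
      Polynomial.aeval (X 0 : MvPolynomial (Fin 2) R) w +
        Polynomial.aeval (X 1 : MvPolynomial (Fin 2) R) w)
    (a b : S) :
    aeval ![a + b, a * b] p = Polynomial.aeval a w + Polynomial.aeval b w := by
  have h := congrArg (aeval (R := R) ![a, b]) hp
  rw [comp_aeval_apply, map_add, ← Polynomial.aeval_algHom_apply,
    ← Polynomial.aeval_algHom_apply, aeval_X, aeval_X, Matrix.cons_val_zero,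
    Matrix.cons_val_one, Matrix.cons_val_zero] at h
  convert h using 2
  ext i
  fin_cases i <;> simp

/-- In `ℂ[x₁,x₂,x₃,x₄]` one has the identity
`(x₁ − x₃)·(u₁ + x₂·u₂ − π₁₃) + (x₂ − x₄)·(u₁ + x₃·u₂ − π₂₄) = 0`, where `u₁`, `u₂`,
`π₁₃`, `π₂₄` are the exact polynomial quotients described in the context.
(Variables: `x₁ = X 0`, `x₂ = X 1`, `x₃ = X 2`, `x₄ = X 3`.) -/
theorem stmt_12 (w : Polynomial ℂ) (p : MvPolynomial (Fin 2) ℂ)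
    (hp : aeval ![(X 0 : MvPolynomial (Fin 2) ℂ) + X 1, X 0 * X 1] p =
      Polynomial.aeval (X 0 : MvPolynomial (Fin 2) ℂ) w +
        Polynomial.aeval (X 1 : MvPolynomial (Fin 2) ℂ) w)
    (u₁ u₂ π₁₃ π₂₄ : MvPolynomial (Fin 4) ℂ)
    (hu₁ : (X 0 + X 1 - X 2 - X 3) * u₁ =
      aeval ![(X 0 : MvPolynomial (Fin 4) ℂ) + X 1, X 0 * X 1] p -
        aeval ![(X 2 : MvPolynomial (Fin 4) ℂ) + X 3, X 0 * X 1] p)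
    (hu₂ : (X 0 * X 1 - X 2 * X 3) * u₂ =
      aeval ![(X 2 : MvPolynomial (Fin 4) ℂ) + X 3, X 0 * X 1] p -
        aeval ![(X 2 : MvPolynomial (Fin 4) ℂ) + X 3, X 2 * X 3] p)
    (hπ₁₃ : (X 0 - X 2) * π₁₃ =
      Polynomial.aeval (X 0 : MvPolynomial (Fin 4) ℂ) w -
        Polynomial.aeval (X 2 : MvPolynomial (Fin 4) ℂ) w)
    (hπ₂₄ : (X 1 - X 3) * π₂₄ =
      Polynomial.aeval (X 1 : MvPolynomial (Fin 4) ℂ) w -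
        Polynomial.aeval (X 3 : MvPolynomial (Fin 4) ℂ) w) :
    (X 0 - X 2) * (u₁ + X 1 * u₂ - π₁₃) + (X 1 - X 3) * (u₁ + X 2 * u₂ - π₂₄) = 0 := by
  have h₁₂ := aeval_add_mul_of_aeval_X_add_X_mul_X hp (X 0 : MvPolynomial (Fin 4) ℂ) (X 1)
  have h₃₄ := aeval_add_mul_of_aeval_X_add_X_mul_X hp (X 2 : MvPolynomial (Fin 4) ℂ) (X 3)
  linear_combination hu₁ + hu₂ - hπ₁₃ - hπ₂₄ + h₁₂ - h₃₄
end

section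
/- In ℂ[x₁,x₂] one has the identity (x₂ − x₁)·(∂p/∂t)(x₁+x₂, x₁x₂) = w'(x₁) − w'(x₂), where ∂p/∂t denotes the partial derivative of p with respect to its second variable and (∂p/∂t)(x₁+x₂, x₁x₂) its evaluation at s = x₁+x₂, t = x₁x₂. -/
open MvPolynomial

private lemma chain2 (f : Fin 2 → MvPolynomial (Fin 2) ℂ) (i : Fin 2)
    (p : MvPolynomial (Fin 2) ℂ) :
    pderiv i (aeval f p) =
      aeval f (pderiv 0 p) * pderiv i (f 0) + aeval f (pderiv 1 p) * pderiv i (f 1) := by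
  induction p using MvPolynomial.induction_on with
  | C a => simp
  | add p q hp hq =>
      simp only [map_add, hp, hq]; ring
  | mul_X p j hp =>
      simp only [map_mul, pderiv_mul, aeval_X, hp]
      fin_cases j <;> simp [pderiv_X, Pi.single_apply] <;> ring

private lemma chain1 (u : MvPolynomial (Fin 2) ℂ) (i : Fin 2) (w : Polynomial ℂ) :
    pderiv i (Polynomial.aeval u w) =
      Polynomial.aeval u (Polynomial.derivative w) * pderiv i u := by
  induction w using Polynomial.induction_on with
  | C a => simp
  | add p q hp hq => simp [hp, hq]; ring
  | monomial n a h =>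
      simp only [Polynomial.derivative_mul, Polynomial.derivative_C, Polynomial.derivative_X_pow,
        map_add, map_mul, pderiv_mul, Polynomial.aeval_C, Polynomial.aeval_X_pow, pderiv_pow,
        map_pow, Polynomial.aeval_X, Polynomial.derivative_pow, Polynomial.derivative_X,
        map_natCast, map_one]
      simp [pderiv_C]
      ring

/-- In `ℂ[x₁,x₂]` one has the identity
`(x₂ − x₁)·(∂p/∂t)(x₁+x₂, x₁x₂) = w'(x₁) − w'(x₂)`, where `∂p/∂t` is the partial derivative
of `p` with respect to its second variable. (Variables: `x₁ = X 0`, `x₂ = X 1`; the second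
variable of `p` is indexed by `1 : Fin 2`.) -/
theorem stmt_13 (w : Polynomial ℂ) (p : MvPolynomial (Fin 2) ℂ)
    (hp : aeval ![(X 0 : MvPolynomial (Fin 2) ℂ) + X 1, X 0 * X 1] p =
      Polynomial.aeval (X 0 : MvPolynomial (Fin 2) ℂ) w +
        Polynomial.aeval (X 1 : MvPolynomial (Fin 2) ℂ) w) :
    (X 1 - X 0) * aeval ![(X 0 : MvPolynomial (Fin 2) ℂ) + X 1, X 0 * X 1] (pderiv 1 p) =
      Polynomial.aeval (X 0 : MvPolynomial (Fin 2) ℂ) (Polynomial.derivative w) -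
        Polynomial.aeval (X 1 : MvPolynomial (Fin 2) ℂ) (Polynomial.derivative w) := by
  set f : Fin 2 → MvPolynomial (Fin 2) ℂ := ![X 0 + X 1, X 0 * X 1] with hf
  have h0 := congrArg (pderiv (0 : Fin 2)) hp
  have h1 := congrArg (pderiv (1 : Fin 2)) hp
  rw [chain2, map_add, chain1, chain1] at h0 h1
  have e00 : pderiv (0 : Fin 2) (f 0) = 1 := by simp [hf, pderiv_X, Pi.single_apply]
  have e10 : pderiv (1 : Fin 2) (f 0) = 1 := by simp [hf, pderiv_X, Pi.single_apply]
  have e01 : pderiv (0 : Fin 2) (f 1) = X 1 := by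
    simp [hf, pderiv_mul, pderiv_X, Pi.single_apply]
  have e11 : pderiv (1 : Fin 2) (f 1) = X 0 := by
    simp [hf, pderiv_mul, pderiv_X, Pi.single_apply]
  rw [e00, e01] at h0
  rw [e10, e11] at h1
  simp only [pderiv_X_self, pderiv_X_of_ne (by decide : (1:Fin 2) ≠ 0),
    pderiv_X_of_ne (by decide : (0:Fin 2) ≠ 1), mul_one, mul_zero, add_zero, zero_add] at h0 h1
  have := sub_eq_sub_iff_sub_eq_sub.mp (congrArg₂ Sub.sub h0 h1)
  linear_combination h0 - h1
end

section
/- With notation as in the context, the following two identities of column vectors over ℂ[x₁,x₂,x₃] hold: (x₁α, −α)ᵀ = H¹·π₂₃ + B¹·H⁰ and (0, −α)ᵀ = H⁰·(x₂−x₃) + B⁰·H¹. (These say that the map H is a homotopy exhibiting the composite χ₀∘F in the Reidemeister I.1 computation as null-homotopic.) -/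
open MvPolynomial

/-- With `u₁, u₂, α, π₂₃, h` the exact polynomial quotients of the
context, `B⁰ = [[x₂−x₃, x₁(x₂−x₃)], [−u₂, u₁]]`, `B¹ = [[u₁, −x₁(x₂−x₃)], [u₂, x₂−x₃]]`,
`H⁰ = (−1, h)ᵀ` and `H¹ = (1, 0)ᵀ`, the identities
`(x₁α, −α)ᵀ = H¹·π₂₃ + B¹·H⁰` and `(0, −α)ᵀ = H⁰·(x₂−x₃) + B⁰·H¹` hold over `ℂ[x₁,x₂,x₃]`.
(Variables: `x₁ = X 0`, `x₂ = X 1`, `x₃ = X 2`.) -/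
theorem stmt_15 (w : Polynomial ℂ) (p : MvPolynomial (Fin 2) ℂ)
    (hp : aeval ![(X 0 : MvPolynomial (Fin 2) ℂ) + X 1, X 0 * X 1] p =
      Polynomial.aeval (X 0 : MvPolynomial (Fin 2) ℂ) w +
        Polynomial.aeval (X 1 : MvPolynomial (Fin 2) ℂ) w)
    (u₁ u₂ α π₂₃ h : MvPolynomial (Fin 3) ℂ)
    (hu₁ : (X 1 - X 2) * u₁ =
      aeval ![(X 0 : MvPolynomial (Fin 3) ℂ) + X 1, X 0 * X 1] p -
        aeval ![(X 0 : MvPolynomial (Fin 3) ℂ) + X 2, X 0 * X 1] p)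
    (hu₂ : (X 0 * (X 1 - X 2)) * u₂ =
      aeval ![(X 0 : MvPolynomial (Fin 3) ℂ) + X 2, X 0 * X 1] p -
        aeval ![(X 0 : MvPolynomial (Fin 3) ℂ) + X 2, X 0 * X 2] p)
    (hα : (X 0 * (X 1 - X 2)) * α =
      aeval ![(X 0 : MvPolynomial (Fin 3) ℂ) + X 1, X 0 * X 1] p -
        aeval ![(X 0 : MvPolynomial (Fin 3) ℂ) + X 1, X 0 * X 2] p)
    (hπ₂₃ : (X 1 - X 2) * π₂₃ =
      Polynomial.aeval (X 1 : MvPolynomial (Fin 3) ℂ) w -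
        Polynomial.aeval (X 2 : MvPolynomial (Fin 3) ℂ) w)
    (hh : (X 1 - X 2) * h = u₂ - α) :
    (![X 0 * α, -α] =
        (π₂₃ • (![1, 0] : Fin 2 → MvPolynomial (Fin 3) ℂ) : Fin 2 → MvPolynomial (Fin 3) ℂ) +
          (!![u₁, -(X 0 * (X 1 - X 2)); u₂, X 1 - X 2]).mulVec ![-1, h]) ∧
    (![0, -α] =
        ((X 1 - X 2 : MvPolynomial (Fin 3) ℂ) • (![-1, h] : Fin 2 → MvPolynomial (Fin 3) ℂ) : Fin 2 → MvPolynomial (Fin 3) ℂ) +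
          (!![X 1 - X 2, X 0 * (X 1 - X 2); -u₂, u₁]).mulVec ![1, 0]) := by
  have hne : (X 1 - X 2 : MvPolynomial (Fin 3) ℂ) ≠ 0 :=
    sub_ne_zero.mpr (fun e => by simpa using MvPolynomial.X_injective e)
  -- key evaluation
  have key : ∀ a b : MvPolynomial (Fin 3) ℂ,
      aeval ![a + b, a * b] p = Polynomial.aeval a w + Polynomial.aeval b w := by
    intro a b
    have h2 := congrArg (aeval (R := ℂ) ![a, b]) hp
    rw [show (aeval ![(X 0 : MvPolynomial (Fin 2) ℂ) + X 1, X 0 * X 1] p)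
        = bind₁ ![(X 0 : MvPolynomial (Fin 2) ℂ) + X 1, X 0 * X 1] p from rfl,
      aeval_bind₁] at h2
    rw [map_add, ← Polynomial.aeval_algHom_apply, ← Polynomial.aeval_algHom_apply] at h2
    have hf : (fun i => aeval (R := ℂ) ![a, b] (![(X 0 : MvPolynomial (Fin 2) ℂ) + X 1, X 0 * X 1] i))
        = ![a + b, a * b] := by
      funext i; fin_cases i <;> simp
    rw [hf] at h2
    simpa using h2
  have e1 := key (X 0) (X 1)
  have e2 := key (X 0) (X 2)
  -- π₂₃ = u₁ + X 0 * u₂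
  have hπ : π₂₃ = u₁ + X 0 * u₂ := by
    apply mul_left_cancel₀ hne
    rw [hπ₂₃]
    have : (X 1 - X 2 : MvPolynomial (Fin 3) ℂ) * (u₁ + X 0 * u₂)
        = (X 1 - X 2) * u₁ + (X 0 * (X 1 - X 2)) * u₂ := by ring
    rw [this, hu₁, hu₂, e1, e2]
    ring
  -- (X 1 - X 2) * h relation to α, u₂ from hh
  constructor <;> funext i <;> fin_cases i <;>
    simp [Matrix.mulVec, dotProduct, Fin.sum_univ_two, hπ]
  · linear_combination X 0 * hh
  · linear_combination -hh
  · linear_combination -hh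
end

section
/- Let M⁰ and M¹ be complex vector spaces and let (d₀ʲ : M⁰ → M¹)_{j≥0} and (d₁ʲ : M¹ → M⁰)_{j≥0} be families of linear maps such that for every integer m ≥ 0 one has Σ_{j=0}^{m} d₀ʲ ∘ d₁^{m−j} = 0. Suppose K ≥ 0 and α⁰, α¹, …, α^K ∈ M¹ satisfy Σ_{i=0}^{k} d₁ⁱ(α^{k−i}) = 0 for every 0 ≤ k ≤ K. Then d₀⁰( Σ_{i=0}^{K} d₁^{i+1}(α^{K−i}) ) = 0. -/
/-- Let `M⁰, M¹` be complex vector spaces with families of linear maps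
`(d₀ʲ : M⁰ → M¹)` and `(d₁ʲ : M¹ → M⁰)` such that `Σ_{j=0}^{m} d₀ʲ ∘ d₁^{m−j} = 0` for all
`m ≥ 0`. If `α⁰, …, α^K ∈ M¹` satisfy `Σ_{i=0}^{k} d₁ⁱ(α^{k−i}) = 0` for `0 ≤ k ≤ K`, then
`d₀⁰( Σ_{i=0}^{K} d₁^{i+1}(α^{K−i}) ) = 0`. -/
theorem stmt_17 (M₀ M₁ : Type*) [AddCommGroup M₀] [Module ℂ M₀]
    [AddCommGroup M₁] [Module ℂ M₁]
    (d₀ : ℕ → (M₀ →ₗ[ℂ] M₁)) (d₁ : ℕ → (M₁ →ₗ[ℂ] M₀))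
    (hd : ∀ m : ℕ, ∑ j ∈ Finset.range (m + 1), (d₀ j).comp (d₁ (m - j)) = 0)
    (K : ℕ) (α : ℕ → M₁)
    (hα : ∀ k ≤ K, ∑ i ∈ Finset.range (k + 1), d₁ i (α (k - i)) = 0) :
    d₀ 0 (∑ i ∈ Finset.range (K + 1), d₁ (i + 1) (α (K - i))) = 0 := by
  -- reflected form of hα
  have h1 : ∀ m ≤ K, ∑ k ∈ Finset.range (m + 1), d₁ (m - k) (α k) = 0 := by
    intro m hm
    have : ∑ k ∈ Finset.range (m + 1), d₁ (m - k) (α k)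
        = ∑ k ∈ Finset.range (m + 1), d₁ (m - k) (α (m - (m - k))) := by
      apply Finset.sum_congr rfl
      intro k hk
      rw [Nat.sub_sub_self (by simpa using Nat.lt_succ_iff.mp (Finset.mem_range.mp hk))]
    rw [this]
    have := Finset.sum_range_reflect (fun i => d₁ i (α (m - i))) (m + 1)
    simp only [Nat.add_sub_cancel] at this
    rw [this]
    exact hα m hm
  -- the double sum is zero
  have hX : ∑ k ∈ Finset.range (K + 1), ∑ j ∈ Finset.range (K + 2 - k),
      d₀ j (d₁ (K + 1 - k - j) (α k)) = 0 := by
    apply Finset.sum_eq_zero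
    intro k hk
    have hk' : k ≤ K := Nat.lt_succ_iff.mp (Finset.mem_range.mp hk)
    have h2 : K + 1 - k + 1 = K + 2 - k := by omega
    have := congrArg (fun f => f (α k)) (hd (K + 1 - k))
    simp only [LinearMap.sum_apply, LinearMap.comp_apply, LinearMap.zero_apply] at this
    rw [← h2]
    exact this
  -- swap the order of summation
  rw [Finset.sum_comm' (s' := fun j => Finset.range (min (K + 1 - j) K + 1))
    (t' := Finset.range (K + 2)) (by intro k j; simp only [Finset.mem_range]; omega)] at hX
  rw [Finset.sum_range_succ'] at hX
  -- the terms with j ≥ 1 vanish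
  have h3 : ∀ j ∈ Finset.range (K + 1),
      ∑ k ∈ Finset.range (min (K + 1 - (j + 1)) K + 1),
        d₀ (j + 1) (d₁ (K + 1 - k - (j + 1)) (α k)) = 0 := by
    intro j hj
    have hj' : j ≤ K := Nat.lt_succ_iff.mp (Finset.mem_range.mp hj)
    have hmin : min (K + 1 - (j + 1)) K = K - j := by omega
    rw [hmin]
    have : ∑ k ∈ Finset.range (K - j + 1), d₀ (j + 1) (d₁ (K + 1 - k - (j + 1)) (α k))
        = d₀ (j + 1) (∑ k ∈ Finset.range (K - j + 1), d₁ (K - j - k) (α k)) := by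
      rw [map_sum]
      apply Finset.sum_congr rfl
      intro k hk
      have hk' : k ≤ K - j := Nat.lt_succ_iff.mp (Finset.mem_range.mp hk)
      have he : K + 1 - k - (j + 1) = K - j - k := by omega
      rw [he]
    rw [this, h1 (K - j) (by omega), map_zero]
  rw [Finset.sum_eq_zero h3, zero_add] at hX
  -- identify the j = 0 term with the goal
  have hmin0 : min (K + 1 - 0) K = K := by omega
  rw [hmin0] at hX
  have h4 : ∑ i ∈ Finset.range (K + 1), d₁ (i + 1) (α (K - i))
      = ∑ k ∈ Finset.range (K + 1), d₁ (K + 1 - k - 0) (α k) := by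
    have := Finset.sum_range_reflect (fun k => d₁ (K + 1 - k - 0) (α k)) (K + 1)
    simp only [Nat.add_sub_cancel] at this
    rw [← this]
    apply Finset.sum_congr rfl
    intro i hi
    have hi' : i ≤ K := Nat.lt_succ_iff.mp (Finset.mem_range.mp hi)
    congr 2
    omega
  rw [h4, map_sum]
  exact hX
end

section
/- With notation as in the context, the following hold. (1) K and L are maps of matrix factorizations: D⁰∘K₀ = K₁∘f_x, D¹∘K₁ = K₀∘g_x, L₁∘D⁰ = f_x∘L₀, and L₀∘D¹ = g_x∘L₁ (where f_x and g_x act on Aᵐ by matrix multiplication). (2) L₀∘K₀ = id_{Aᵐ} and L₁∘K₁ = id_{Aᵐ}. (3) H is a homotopy exhibiting K∘L as homotopic to the identity: id_{N⁰} − K₀∘L₀ = H₁∘D⁰ + D¹∘H₀ and id_{N¹} − K₁∘L₁ = D⁰∘H₁ + H₀∘D¹. In particular the matrix factorization (Aᵐ, f_x, g_x) obtained by removing the mark is homotopy equivalent to N. -/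
/-!
Every identity is checked after multiplying by `x - y`, a non-zero-divisor of `B`, which turns the
exact quotients `qf = (f_x - f)/(x - y)`, `qg = (g_x - g)/(x - y)`, `π` and the components of `H`
back into differences. The only identity that is not formal is `qg f_x + g qf = π`: multiplied by
`x - y` it reads `g_x f_x - g f = w(x) - w(y)`, the difference of the two factorizations
`g f = c + w(y)` and `g_x f_x = c + w(x)`. `L` is evaluation at `y = x`, which kills `x - y`.
-/

noncomputable section

namespace MF18

variable (r m : ℕ)

/-- `S = ℂ[x₁,…,x_r]`. -/
abbrev S := MvPolynomial (Fin r) ℂ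

/-- `A = S[x]`.  (Note that `A` is also used as the ring `S[y]` of polynomials in the
single variable `y` over `S`, which is the same ring with the variable renamed.) -/
abbrev A := Polynomial (S r)

/-- `B = S[x,y]`, realized as `S[x][y]`: the outer variable is `y`, the inner one is `x`. -/
abbrev B := Polynomial (A r)

/-- The element `x ∈ B`. -/
def x : B r := Polynomial.C Polynomial.X

/-- The element `y ∈ B`. -/
def y : B r := Polynomial.X

/-- `σ : B → B`, the `S`-algebra homomorphism fixing `x` and sending `y` to `x`. -/
def σ : B r →+* B r :=
  (Polynomial.C : A r →+* B r).comp (Polynomial.evalRingHom (Polynomial.X : A r))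

/-- `σ` applied entrywise to vectors. -/
def σv (u : Fin m → B r) : Fin m → B r := fun i => σ r (u i)

/-- The inclusion `S[y] → B = S[x][y]` (the variable of `A = S[y]` goes to `y`). -/
def ofY : A r →+* B r := Polynomial.mapRingHom (Polynomial.C : S r →+* A r)

/-- The inclusion `A = S[x] → B = S[x][y]` as constants in `y`.  Composing a polynomial
in `S[y]` (an element of `A`) with this map realizes the substitution `y ↦ x`. -/
def ofA : A r →+* B r := Polynomial.C

/-- `D⁰ : N⁰ → N¹`, `(u,v) ↦ (f·u − (x−y)·v, π·u + g·v)` (with `f`, `g` regarded as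
matrices over `B` in the variable `y`). -/
def D0 (f g : Matrix (Fin m) (Fin m) (A r)) (π : B r)
    (uv : (Fin m → B r) × (Fin m → B r)) : (Fin m → B r) × (Fin m → B r) :=
  ((f.map (ofY r)).mulVec uv.1 - (x r - y r) • uv.2,
    π • uv.1 + (g.map (ofY r)).mulVec uv.2)

/-- `D¹ : N¹ → N⁰`, `(u,v) ↦ (g·u + (x−y)·v, −π·u + f·v)`. -/
def D1 (f g : Matrix (Fin m) (Fin m) (A r)) (π : B r)
    (uv : (Fin m → B r) × (Fin m → B r)) : (Fin m → B r) × (Fin m → B r) :=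
  ((g.map (ofY r)).mulVec uv.1 + (x r - y r) • uv.2,
    -(π • uv.1) + (f.map (ofY r)).mulVec uv.2)

/-- `K₀ : Aᵐ → N⁰`, `v ↦ (v, −((f_x−f)/(x−y))·v)`, where `qf = (f_x−f)/(x−y)`. -/
def K0 (qf : Matrix (Fin m) (Fin m) (B r)) (v : Fin m → A r) :
    (Fin m → B r) × (Fin m → B r) :=
  (fun i => ofA r (v i), -(qf.mulVec fun i => ofA r (v i)))

/-- `K₁ : Aᵐ → N¹`, `v ↦ (v, ((g_x−g)/(x−y))·v)`, where `qg = (g_x−g)/(x−y)`. -/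
def K1 (qg : Matrix (Fin m) (Fin m) (B r)) (v : Fin m → A r) :
    (Fin m → B r) × (Fin m → B r) :=
  (fun i => ofA r (v i), qg.mulVec fun i => ofA r (v i))

/-- `L₀ : N⁰ → Aᵐ`, `(u,v) ↦ σ(u)`. -/
def L0 (uv : (Fin m → B r) × (Fin m → B r)) : Fin m → A r :=
  fun i => Polynomial.eval (Polynomial.X : A r) (uv.1 i)

/-- `L₁ : N¹ → Aᵐ`, `(u,v) ↦ σ(u)`. -/
def L1 (uv : (Fin m → B r) × (Fin m → B r)) : Fin m → A r :=
  fun i => Polynomial.eval (Polynomial.X : A r) (uv.1 i)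

end MF18

section DifferenceQuotients

open Matrix

variable {R n : Type*} [CommRing R] [Fintype n] {d : R} {M M' Q : Matrix n n R}

theorem Matrix.mulVec_add_smul_mulVec_of_smul_eq_sub (hQ : d • Q = M' - M) (v : n → R) :
    M *ᵥ v + d • (Q *ᵥ v) = M' *ᵥ v := by
  rw [← smul_mulVec, hQ, sub_mulVec, add_sub_cancel]

theorem Matrix.map_mul_map_of_mul_eq_smul_one [DecidableEq n] {S : Type*} [CommRing S]
    (φ : R →+* S) {F G : Matrix n n R} {e : R} (h : G * F = e • 1) :
    G.map φ * F.map φ = φ e • 1 := by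
  rw [← Matrix.map_mul, h, map_smul' _ _ _ (map_mul φ), Matrix.map_one _ (map_zero φ) (map_one φ)]

variable [IsDomain R]

/-- Multiplied by `d`, both sides become `G' F' - G F`. -/
theorem Matrix.diffQuot_mul_add_mul_diffQuot [DecidableEq n] (hd : d ≠ 0) {e e' π : R}
    {F F' G G' QF QG : Matrix n n R} (hGF : G * F = e • 1) (hGF' : G' * F' = e' • 1)
    (hπ : d * π = e' - e) (hQF : d • QF = F' - F) (hQG : d • QG = G' - G) :
    QG * F' + G * QF = π • 1 := by
  apply smul_right_injective _ hd
  beta_reduce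
  rw [smul_add, ← smul_mul_assoc, hQG, ← mul_smul_comm, hQF, sub_mul, mul_sub, hGF, hGF',
    smul_smul, hπ, sub_smul]
  abel

theorem Matrix.diffQuot_mulVec_add_mulVec_diffQuot [DecidableEq n] (hd : d ≠ 0) {e e' π : R}
    {F F' G G' QF QG : Matrix n n R} (hGF : G * F = e • 1) (hGF' : G' * F' = e' • 1)
    (hπ : d * π = e' - e) (hQF : d • QF = F' - F) (hQG : d • QG = G' - G) (v : n → R) :
    QG *ᵥ (F' *ᵥ v) + G *ᵥ (QF *ᵥ v) = π • v := by
  rw [mulVec_mulVec, mulVec_mulVec, ← add_mulVec,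
    diffQuot_mul_add_mul_diffQuot hd hGF hGF' hπ hQF hQG, smul_mulVec, one_mulVec]

theorem Matrix.add_mulVec_eq_of_smul_eq (hd : d ≠ 0) (hQ : d • Q = M' - M)
    {u u' v h h' : n → R} (hh : d • h = u - u')
    (hh' : d • h' = M' *ᵥ u' - (M *ᵥ u - d • v)) :
    v + Q *ᵥ u' = h' + M *ᵥ h := by
  apply smul_right_injective _ hd
  beta_reduce
  rw [smul_add, smul_add, hh', ← mulVec_smul M d h, hh, mulVec_sub, ← smul_mulVec, hQ, sub_mulVec]
  abel

theorem Matrix.sub_mulVec_eq_of_smul_eq (hd : d ≠ 0) (hQ : d • Q = M' - M)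
    {u u' v h h' : n → R} (hh : d • h = u' - u)
    (hh' : d • h' = M *ᵥ u + d • v - M' *ᵥ u') :
    v - Q *ᵥ u' = M *ᵥ h + h' := by
  apply smul_right_injective _ hd
  beta_reduce
  rw [smul_add, smul_sub, hh', ← mulVec_smul M d h, hh, mulVec_sub, ← smul_mulVec, hQ, sub_mulVec]
  abel

end DifferenceQuotients

namespace MF18

open Polynomial Matrix

variable {r m}

theorem x_sub_y_ne_zero : x r - y r ≠ 0 := by
  intro h
  simpa [x, y] using congrArg (coeff · 1) h

theorem eval_x_sub_y : eval (X : A r) (x r - y r) = 0 := by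
  simp [x, y]

theorem eval_ofY (a : A r) : eval (X : A r) (ofY r a) = a := by
  simp [ofY, eval_map, eval₂_C_X]

theorem eval_ofA (a : A r) : eval (X : A r) (ofA r a) = a :=
  eval_C

theorem ofA_aeval (w : ℂ[X]) : ofA r (aeval (X : A r) w) = aeval (x r) w := by
  simpa [ofA, x, CAlgHom] using (aeval_algHom_apply (CAlgHom (R := ℂ) (A := A r)) X w).symm

theorem ofY_aeval (w : ℂ[X]) : ofY r (aeval (X : A r) w) = aeval (y r) w := by
  simpa [ofY, y, mapAlgHom, CAlgHom] using
    (aeval_algHom_apply (mapAlgHom (CAlgHom (R := ℂ) (A := S r))) X w).symm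

theorem ofA_C_eq_ofY_C (c : S r) : ofA r (C c) = ofY r (C c) := by
  simp [ofA, ofY]

theorem eval_mulVec_map_ofY_add_smul (M : Matrix (Fin m) (Fin m) (A r)) (u v : Fin m → B r) :
    (fun i => eval X ((M.map (ofY r) *ᵥ u + (x r - y r) • v) i)) =
      M *ᵥ fun i => eval X (u i) := by
  funext i
  rw [Pi.add_apply, eval_add, Pi.smul_apply, smul_eq_mul, eval_mul, eval_x_sub_y, zero_mul,
    add_zero, ← coe_evalRingHom, RingHom.map_mulVec, map_map]
  congr 1
  exact Matrix.ext fun _ _ => eval_ofY _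

theorem eval_mulVec_map_ofY_sub_smul (M : Matrix (Fin m) (Fin m) (A r)) (u v : Fin m → B r) :
    (fun i => eval X ((M.map (ofY r) *ᵥ u - (x r - y r) • v) i)) =
      M *ᵥ fun i => eval X (u i) := by
  rw [sub_eq_add_neg (M.map (ofY r) *ᵥ u), ← smul_neg (x r - y r) v, eval_mulVec_map_ofY_add_smul]

theorem σv_eq_mulVec_of_eval_eq {M : Matrix (Fin m) (Fin m) (A r)} {u u₀ : Fin m → B r}
    (h : (fun i => eval X (u i)) = M *ᵥ fun i => eval X (u₀ i)) :
    σv r m u = M.map (ofA r) *ᵥ σv r m u₀ :=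
  funext fun i => (congrArg (ofA r) (congrFun h i)).trans (RingHom.map_mulVec (ofA r) M _ i)

theorem ofA_mulVec (M : Matrix (Fin m) (Fin m) (A r)) (v : Fin m → A r) :
    (fun i => ofA r ((M *ᵥ v) i)) = M.map (ofA r) *ᵥ fun i => ofA r (v i) :=
  funext (RingHom.map_mulVec (ofA r) M v)

theorem L0_K0 (qf : Matrix (Fin m) (Fin m) (B r)) (v : Fin m → A r) : L0 r m (K0 r m qf v) = v :=
  funext fun i => eval_ofA (v i)

theorem L1_K1 (qg : Matrix (Fin m) (Fin m) (B r)) (v : Fin m → A r) : L1 r m (K1 r m qg v) = v :=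
  funext fun i => eval_ofA (v i)

section Factorization

variable {w : ℂ[X]} {c : S r} {f g : Matrix (Fin m) (Fin m) (A r)} {π : B r}
  {qf qg : Matrix (Fin m) (Fin m) (B r)}

theorem L1_D0 (uv : (Fin m → B r) × (Fin m → B r)) :
    L1 r m (D0 r m f g π uv) = f *ᵥ L0 r m uv :=
  eval_mulVec_map_ofY_sub_smul f uv.1 uv.2

theorem L0_D1 (uv : (Fin m → B r) × (Fin m → B r)) :
    L0 r m (D1 r m f g π uv) = g *ᵥ L1 r m uv :=
  eval_mulVec_map_ofY_add_smul g uv.1 uv.2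

theorem qg_mulVec_add_mulVec_qf
    (hgf : g * f = (C c + aeval (X : A r) w) • (1 : Matrix (Fin m) (Fin m) (A r)))
    (hπ : (x r - y r) * π = aeval (x r) w - aeval (y r) w)
    (hqf : (x r - y r) • qf = f.map (ofA r) - f.map (ofY r))
    (hqg : (x r - y r) • qg = g.map (ofA r) - g.map (ofY r)) (v : Fin m → B r) :
    qg *ᵥ (f.map (ofA r) *ᵥ v) + g.map (ofY r) *ᵥ (qf *ᵥ v) = π • v := by
  have hπ' : (x r - y r) * π = ofA r (C c + aeval X w) - ofY r (C c + aeval X w) := by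
    rw [hπ, map_add, map_add, ofA_aeval, ofY_aeval, ofA_C_eq_ofY_C]
    ring
  have hgfY := map_mul_map_of_mul_eq_smul_one (S := B r) (ofY r) hgf
  have hgfX := map_mul_map_of_mul_eq_smul_one (S := B r) (ofA r) hgf
  exact diffQuot_mulVec_add_mulVec_diffQuot x_sub_y_ne_zero hgfY hgfX hπ' hqf hqg v

theorem D0_K0
    (hgf : g * f = (C c + aeval (X : A r) w) • (1 : Matrix (Fin m) (Fin m) (A r)))
    (hπ : (x r - y r) * π = aeval (x r) w - aeval (y r) w)
    (hqf : (x r - y r) • qf = f.map (ofA r) - f.map (ofY r))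
    (hqg : (x r - y r) • qg = g.map (ofA r) - g.map (ofY r)) (v : Fin m → A r) :
    D0 r m f g π (K0 r m qf v) = K1 r m qg (f *ᵥ v) := by
  simp only [D0, K0, K1]
  rw [ofA_mulVec f v]
  set v' : Fin m → B r := fun i => ofA r (v i)
  refine Prod.ext ?_ ?_
  · show f.map (ofY r) *ᵥ v' - (x r - y r) • -(qf *ᵥ v') = f.map (ofA r) *ᵥ v'
    rw [smul_neg (x r - y r) (qf *ᵥ v'), sub_neg_eq_add]
    exact mulVec_add_smul_mulVec_of_smul_eq_sub hqf v'
  · show π • v' + g.map (ofY r) *ᵥ -(qf *ᵥ v') = qg *ᵥ (f.map (ofA r) *ᵥ v')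
    rw [← qg_mulVec_add_mulVec_qf hgf hπ hqf hqg v',
      mulVec_neg (qf *ᵥ v') (g.map (ofY r))]
    abel

theorem D1_K1
    (hfg : f * g = (C c + aeval (X : A r) w) • (1 : Matrix (Fin m) (Fin m) (A r)))
    (hπ : (x r - y r) * π = aeval (x r) w - aeval (y r) w)
    (hqf : (x r - y r) • qf = f.map (ofA r) - f.map (ofY r))
    (hqg : (x r - y r) • qg = g.map (ofA r) - g.map (ofY r)) (v : Fin m → A r) :
    D1 r m f g π (K1 r m qg v) = K0 r m qf (g *ᵥ v) := by
  simp only [D1, K0, K1]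
  rw [ofA_mulVec g v]
  set v' : Fin m → B r := fun i => ofA r (v i)
  refine Prod.ext ?_ ?_
  · exact mulVec_add_smul_mulVec_of_smul_eq_sub hqg v'
  · show -(π • v') + f.map (ofY r) *ᵥ (qg *ᵥ v') = -(qf *ᵥ (g.map (ofA r) *ᵥ v'))
    rw [← qg_mulVec_add_mulVec_qf hfg hπ hqg hqf v']
    abel

theorem sub_K0_L0 (hqf : (x r - y r) • qf = f.map (ofA r) - f.map (ofY r))
    {u v hu hu' : Fin m → B r} (hhu : (x r - y r) • hu = u - σv r m u)
    (hhu' : (x r - y r) • hu' =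
      σv r m (f.map (ofY r) *ᵥ u - (x r - y r) • v) - (f.map (ofY r) *ᵥ u - (x r - y r) • v)) :
    (u, v) - K0 r m qf (L0 r m (u, v)) = ((0 : Fin m → B r), hu') + D1 r m f g π (0, hu) := by
  rw [σv_eq_mulVec_of_eval_eq (eval_mulVec_map_ofY_sub_smul f u v)] at hhu'
  refine Prod.ext ?_ ?_
  · show u - σv r m u = 0 + (g.map (ofY r) *ᵥ 0 + (x r - y r) • hu)
    rw [hhu, mulVec_zero (g.map (ofY r))]
    abel
  · show v - -(qf *ᵥ σv r m u) = hu' + (-(π • (0 : Fin m → B r)) + f.map (ofY r) *ᵥ hu)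
    rw [smul_zero π, neg_zero (G := Fin m → B r), zero_add, sub_neg_eq_add v (qf *ᵥ σv r m u)]
    exact add_mulVec_eq_of_smul_eq (R := B r) x_sub_y_ne_zero hqf hhu hhu'

theorem sub_K1_L1 (hqg : (x r - y r) • qg = g.map (ofA r) - g.map (ofY r))
    {u v hu₁ hu₃ : Fin m → B r} (hhu₁ : (x r - y r) • hu₁ = σv r m u - u)
    (hhu₃ : (x r - y r) • hu₃ =
      (g.map (ofY r) *ᵥ u + (x r - y r) • v) - σv r m (g.map (ofY r) *ᵥ u + (x r - y r) • v)) :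
    (u, v) - K1 r m qg (L1 r m (u, v)) = D0 r m f g π (0, hu₁) + ((0 : Fin m → B r), hu₃) := by
  rw [σv_eq_mulVec_of_eval_eq (eval_mulVec_map_ofY_add_smul g u v)] at hhu₃
  refine Prod.ext ?_ ?_
  · show u - σv r m u = (f.map (ofY r) *ᵥ 0 - (x r - y r) • hu₁) + 0
    rw [hhu₁, mulVec_zero (f.map (ofY r))]
    abel
  · show v - qg *ᵥ σv r m u = (π • (0 : Fin m → B r) + g.map (ofY r) *ᵥ hu₁) + hu₃
    rw [smul_zero π, zero_add]
    exact sub_mulVec_eq_of_smul_eq (R := B r) x_sub_y_ne_zero hqg hhu₁ hhu₃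

end Factorization

end MF18

open MF18 in
/-- The homotopy `H₀ (u,v) = (0, (u−σ(u))/(x−y))`, `H₁ (u,v) = (0, (σ(u)−u)/(x−y))` is encoded
through universally quantified witnesses of the indicated exact divisions by `x−y`. -/
theorem stmt_18_general (r m : ℕ) (w : Polynomial ℂ) (c : S r)
    (f g : Matrix (Fin m) (Fin m) (A r))
    (hfg : f * g = (Polynomial.C c + Polynomial.aeval (Polynomial.X : A r) w) •
      (1 : Matrix (Fin m) (Fin m) (A r)))
    (hgf : g * f = (Polynomial.C c + Polynomial.aeval (Polynomial.X : A r) w) •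
      (1 : Matrix (Fin m) (Fin m) (A r)))
    (π : B r)
    (hπ : (x r - y r) * π = Polynomial.aeval (x r) w - Polynomial.aeval (y r) w)
    (qf qg : Matrix (Fin m) (Fin m) (B r))
    (hqf : (x r - y r) • qf = f.map (ofA r) - f.map (ofY r))
    (hqg : (x r - y r) • qg = g.map (ofA r) - g.map (ofY r)) :
    -- (1) `K` is a map of matrix factorizations: `D⁰∘K₀ = K₁∘f_x`, `D¹∘K₁ = K₀∘g_x`
    (∀ v : Fin m → A r, D0 r m f g π (K0 r m qf v) = K1 r m qg (f.mulVec v)) ∧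
    (∀ v : Fin m → A r, D1 r m f g π (K1 r m qg v) = K0 r m qf (g.mulVec v)) ∧
    -- (1) `L` is a map of matrix factorizations: `L₁∘D⁰ = f_x∘L₀`, `L₀∘D¹ = g_x∘L₁`
    (∀ uv : (Fin m → B r) × (Fin m → B r),
      L1 r m (D0 r m f g π uv) = f.mulVec (L0 r m uv)) ∧
    (∀ uv : (Fin m → B r) × (Fin m → B r),
      L0 r m (D1 r m f g π uv) = g.mulVec (L1 r m uv)) ∧
    -- (2) `L∘K = id`
    (∀ v : Fin m → A r, L0 r m (K0 r m qf v) = v) ∧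
    (∀ v : Fin m → A r, L1 r m (K1 r m qg v) = v) ∧
    -- (3) `id_{N⁰} − K₀∘L₀ = H₁∘D⁰ + D¹∘H₀`
    (∀ u v hu hu' : Fin m → B r,
      (x r - y r) • hu = u - σv r m u →
      (x r - y r) • hu' =
        σv r m ((f.map (ofY r)).mulVec u - (x r - y r) • v) -
          ((f.map (ofY r)).mulVec u - (x r - y r) • v) →
      (u, v) - K0 r m qf (L0 r m (u, v)) =
        ((0 : Fin m → B r), hu') + D1 r m f g π ((0 : Fin m → B r), hu)) ∧
    -- (3) `id_{N¹} − K₁∘L₁ = D⁰∘H₁ + H₀∘D¹`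
    (∀ u v hu₁ hu₃ : Fin m → B r,
      (x r - y r) • hu₁ = σv r m u - u →
      (x r - y r) • hu₃ =
        ((g.map (ofY r)).mulVec u + (x r - y r) • v) -
          σv r m ((g.map (ofY r)).mulVec u + (x r - y r) • v) →
      (u, v) - K1 r m qg (L1 r m (u, v)) =
        D0 r m f g π ((0 : Fin m → B r), hu₁) + ((0 : Fin m → B r), hu₃)) :=
  ⟨D0_K0 hgf hπ hqf hqg, D1_K1 hfg hπ hqf hqg, L1_D0, L0_D1, L0_K0 qf, L1_K1 qg,
    fun _ _ _ _ => sub_K0_L0 hqf, fun _ _ _ _ => sub_K1_L1 hqg⟩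

open MF18 in
/-- (1) `K` and `L` are maps of matrix factorizations; (2) `L∘K` is the
identity of the mark-free factorization `(Aᵐ, f_x, g_x)`; (3) `H` is a homotopy exhibiting
`K∘L` as homotopic to the identity of `N`.  In particular the matrix factorization
`(Aᵐ, f_x, g_x)` obtained by removing the mark is homotopy equivalent to `N`.
(The homotopy `H₀ (u,v) = (0, (u−σ(u))/(x−y))`, `H₁ (u,v) = (0, (σ(u)−u)/(x−y))` is encoded
through universally quantified witnesses of the indicated exact divisions by `x−y`.) -/
theorem stmt_18 (r m : ℕ) (hm : 1 ≤ m) (w : Polynomial ℂ) (c : S r)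
    (f g : Matrix (Fin m) (Fin m) (A r))
    (hfg : f * g = (Polynomial.C c + Polynomial.aeval (Polynomial.X : A r) w) •
      (1 : Matrix (Fin m) (Fin m) (A r)))
    (hgf : g * f = (Polynomial.C c + Polynomial.aeval (Polynomial.X : A r) w) •
      (1 : Matrix (Fin m) (Fin m) (A r)))
    (π : B r)
    (hπ : (x r - y r) * π = Polynomial.aeval (x r) w - Polynomial.aeval (y r) w)
    (qf qg : Matrix (Fin m) (Fin m) (B r))
    (hqf : (x r - y r) • qf = f.map (ofA r) - f.map (ofY r))
    (hqg : (x r - y r) • qg = g.map (ofA r) - g.map (ofY r)) :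
    -- (1) `K` is a map of matrix factorizations: `D⁰∘K₀ = K₁∘f_x`, `D¹∘K₁ = K₀∘g_x`
    (∀ v : Fin m → A r, D0 r m f g π (K0 r m qf v) = K1 r m qg (f.mulVec v)) ∧
    (∀ v : Fin m → A r, D1 r m f g π (K1 r m qg v) = K0 r m qf (g.mulVec v)) ∧
    -- (1) `L` is a map of matrix factorizations: `L₁∘D⁰ = f_x∘L₀`, `L₀∘D¹ = g_x∘L₁`
    (∀ uv : (Fin m → B r) × (Fin m → B r),
      L1 r m (D0 r m f g π uv) = f.mulVec (L0 r m uv)) ∧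
    (∀ uv : (Fin m → B r) × (Fin m → B r),
      L0 r m (D1 r m f g π uv) = g.mulVec (L1 r m uv)) ∧
    -- (2) `L∘K = id`
    (∀ v : Fin m → A r, L0 r m (K0 r m qf v) = v) ∧
    (∀ v : Fin m → A r, L1 r m (K1 r m qg v) = v) ∧
    -- (3) `id_{N⁰} − K₀∘L₀ = H₁∘D⁰ + D¹∘H₀`
    (∀ u v hu hu' : Fin m → B r,
      (x r - y r) • hu = u - σv r m u →
      (x r - y r) • hu' =
        σv r m ((f.map (ofY r)).mulVec u - (x r - y r) • v) -
          ((f.map (ofY r)).mulVec u - (x r - y r) • v) →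
      (u, v) - K0 r m qf (L0 r m (u, v)) =
        ((0 : Fin m → B r), hu') + D1 r m f g π ((0 : Fin m → B r), hu)) ∧
    -- (3) `id_{N¹} − K₁∘L₁ = D⁰∘H₁ + H₀∘D¹`
    (∀ u v hu₁ hu₃ : Fin m → B r,
      (x r - y r) • hu₁ = σv r m u - u →
      (x r - y r) • hu₃ =
        ((g.map (ofY r)).mulVec u + (x r - y r) • v) -
          σv r m ((g.map (ofY r)).mulVec u + (x r - y r) • v) →
      (u, v) - K1 r m qg (L1 r m (u, v)) =
        D0 r m f g π ((0 : Fin m → B r), hu₁) + ((0 : Fin m → B r), hu₃)) :=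
  stmt_18_general r m w c f g hfg hgf π hπ qf qg hqf hqg
end
end

section
/- With notation as in the context, the pairs of 2×2 matrices (U₀,U₁) and (V₀,V₁) define maps of matrix factorizations between the Khovanov–Rozansky factorizations (P₀,P₁) and (Q₀,Q₁), and their composites are multiplication by x₃−x₂; explicitly, the following matrix identities hold over ℂ[x₁,x₂,x₃,x₄]: U₁·P₀ = Q₀·U₀, U₀·P₁ = Q₁·U₁, V₁·Q₀ = P₀·V₀, V₀·Q₁ = P₁·V₁, and V₀·U₀ = V₁·U₁ = U₀·V₀ = U₁·V₁ = (x₃−x₂)·I₂. -/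
open MvPolynomial

set_option maxHeartbeats 1000000

/-- The pairs of `2×2` matrices `(U₀,U₁)` and `(V₀,V₁)` define maps of
matrix factorizations between the Khovanov–Rozansky factorizations `(P₀,P₁)` and `(Q₀,Q₁)`,
and their composites are multiplication by `x₃−x₂`:
`U₁·P₀ = Q₀·U₀`, `U₀·P₁ = Q₁·U₁`, `V₁·Q₀ = P₀·V₀`, `V₀·Q₁ = P₁·V₁`, and
`V₀·U₀ = V₁·U₁ = U₀·V₀ = U₁·V₁ = (x₃−x₂)·I₂`, over `ℂ[x₁,x₂,x₃,x₄]`.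
(Variables: `x₁ = X 0`, `x₂ = X 1`, `x₃ = X 2`, `x₄ = X 3`; `u₁, u₂, π₁₃, π₂₄, a` are the
exact polynomial quotients of the context.) -/
theorem stmt_19 (w : Polynomial ℂ) (p : MvPolynomial (Fin 2) ℂ)
    (hp : aeval ![(X 0 : MvPolynomial (Fin 2) ℂ) + X 1, X 0 * X 1] p =
      Polynomial.aeval (X 0 : MvPolynomial (Fin 2) ℂ) w +
        Polynomial.aeval (X 1 : MvPolynomial (Fin 2) ℂ) w)
    (u₁ u₂ π₁₃ π₂₄ a : MvPolynomial (Fin 4) ℂ)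
    (hu₁ : (X 0 + X 1 - X 2 - X 3) * u₁ =
      aeval ![(X 0 : MvPolynomial (Fin 4) ℂ) + X 1, X 0 * X 1] p -
        aeval ![(X 2 : MvPolynomial (Fin 4) ℂ) + X 3, X 0 * X 1] p)
    (hu₂ : (X 0 * X 1 - X 2 * X 3) * u₂ =
      aeval ![(X 2 : MvPolynomial (Fin 4) ℂ) + X 3, X 0 * X 1] p -
        aeval ![(X 2 : MvPolynomial (Fin 4) ℂ) + X 3, X 2 * X 3] p)
    (hπ₁₃ : (X 0 - X 2) * π₁₃ =
      Polynomial.aeval (X 0 : MvPolynomial (Fin 4) ℂ) w -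
        Polynomial.aeval (X 2 : MvPolynomial (Fin 4) ℂ) w)
    (hπ₂₄ : (X 1 - X 3) * π₂₄ =
      Polynomial.aeval (X 1 : MvPolynomial (Fin 4) ℂ) w -
        Polynomial.aeval (X 3 : MvPolynomial (Fin 4) ℂ) w)
    (ha : (X 0 - X 2) * a = u₁ + X 2 * u₂ - π₂₄)
    (P₀ P₁ Q₀ Q₁ U₀ U₁ V₀ V₁ : Matrix (Fin 2) (Fin 2) (MvPolynomial (Fin 4) ℂ))
    (hP₀ : P₀ = !![π₁₃, X 1 - X 3; π₂₄, X 2 - X 0])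
    (hP₁ : P₁ = !![X 0 - X 2, X 1 - X 3; π₂₄, -π₁₃])
    (hQ₀ : Q₀ = !![u₁, X 0 * X 1 - X 2 * X 3; u₂, X 2 + X 3 - X 0 - X 1])
    (hQ₁ : Q₁ = !![X 0 + X 1 - X 2 - X 3, X 0 * X 1 - X 2 * X 3; u₂, -u₁])
    (hU₀ : U₀ = !![X 2 - X 1, 0; a, 1])
    (hU₁ : U₁ = !![X 2, -X 1; -1, 1])
    (hV₀ : V₀ = !![1, 0; -a, X 2 - X 1])
    (hV₁ : V₁ = !![1, X 1; 1, X 2]) :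
    U₁ * P₀ = Q₀ * U₀ ∧ U₀ * P₁ = Q₁ * U₁ ∧
    V₁ * Q₀ = P₀ * V₀ ∧ V₀ * Q₁ = P₁ * V₁ ∧
    V₀ * U₀ = ((X 2 : MvPolynomial (Fin 4) ℂ) - X 1) • (1 : Matrix (Fin 2) (Fin 2) (MvPolynomial (Fin 4) ℂ)) ∧
    V₁ * U₁ = ((X 2 : MvPolynomial (Fin 4) ℂ) - X 1) • (1 : Matrix (Fin 2) (Fin 2) (MvPolynomial (Fin 4) ℂ)) ∧
    U₀ * V₀ = ((X 2 : MvPolynomial (Fin 4) ℂ) - X 1) • (1 : Matrix (Fin 2) (Fin 2) (MvPolynomial (Fin 4) ℂ)) ∧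
    U₁ * V₁ = ((X 2 : MvPolynomial (Fin 4) ℂ) - X 1) • (1 : Matrix (Fin 2) (Fin 2) (MvPolynomial (Fin 4) ℂ)) := by
    -- transport `hp` to the four-variable ring along the two substitutions
  have hA : aeval ![(X 0 : MvPolynomial (Fin 4) ℂ) + X 1, X 0 * X 1] p =
      Polynomial.aeval (X 0 : MvPolynomial (Fin 4) ℂ) w +
        Polynomial.aeval (X 1 : MvPolynomial (Fin 4) ℂ) w := by
    have h := congrArg (aeval (R := ℂ) ![(X 0 : MvPolynomial (Fin 4) ℂ), X 1]) hp
    rw [comp_aeval_apply, map_add, ← Polynomial.aeval_algHom_apply,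
      ← Polynomial.aeval_algHom_apply] at h
    have hv : (fun i => (aeval (R := ℂ) ![(X 0 : MvPolynomial (Fin 4) ℂ), X 1])
        (![(X 0 : MvPolynomial (Fin 2) ℂ) + X 1, X 0 * X 1] i)) =
        ![(X 0 : MvPolynomial (Fin 4) ℂ) + X 1, X 0 * X 1] := by
      funext i; fin_cases i <;> simp
    rw [hv] at h
    simpa using h
  have hC : aeval ![(X 2 : MvPolynomial (Fin 4) ℂ) + X 3, X 2 * X 3] p =
      Polynomial.aeval (X 2 : MvPolynomial (Fin 4) ℂ) w +
        Polynomial.aeval (X 3 : MvPolynomial (Fin 4) ℂ) w := by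
    have h := congrArg (aeval (R := ℂ) ![(X 2 : MvPolynomial (Fin 4) ℂ), X 3]) hp
    rw [comp_aeval_apply, map_add, ← Polynomial.aeval_algHom_apply,
      ← Polynomial.aeval_algHom_apply] at h
    have hv : (fun i => (aeval (R := ℂ) ![(X 2 : MvPolynomial (Fin 4) ℂ), X 3])
        (![(X 0 : MvPolynomial (Fin 2) ℂ) + X 1, X 0 * X 1] i)) =
        ![(X 2 : MvPolynomial (Fin 4) ℂ) + X 3, X 2 * X 3] := by
      funext i; fin_cases i <;> simp
    rw [hv] at h
    simpa using h
  rw [hA] at hu₁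
  rw [hC] at hu₂
  have hne : (X 0 - X 2 : MvPolynomial (Fin 4) ℂ) ≠ 0 := by
    refine sub_ne_zero_of_ne fun h => ?_
    have := MvPolynomial.X_injective h
    simp at this
  have hK : (X 0 + X 1 - X 2 - X 3) * a = π₁₃ - π₂₄ + (X 2 - X 1) * u₂ := by
    apply mul_left_cancel₀ hne
    linear_combination (X 0 + X 1 - X 2 - X 3) * ha + hu₁ + hu₂ - hπ₁₃ - hπ₂₄
  have he1 : X 2 * π₁₃ - X 1 * π₂₄ =
      (X 2 - X 1) * u₁ + (X 0 * X 1 - X 2 * X 3) * a := by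
    apply mul_left_cancel₀ hne
    linear_combination (-(X 0 * X 1 - X 2 * X 3)) * ha - X 2 * hu₁ - X 2 * hu₂ +
      X 2 * hπ₁₃ + X 2 * hπ₂₄
  subst hP₀ hP₁ hQ₀ hQ₁ hU₀ hU₁ hV₀ hV₁
  refine ⟨?_, ?_, ?_, ?_, ?_, ?_, ?_, ?_⟩ <;>
  · apply Matrix.ext
    intro i j
    fin_cases i <;> fin_cases j <;>
      simp [Matrix.mul_apply, Fin.sum_univ_two, Matrix.one_apply, smul_eq_mul] <;>
      first
        | ring1
        | linear_combination ha
        | linear_combination -ha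
        | linear_combination hK
        | linear_combination -hK
        | linear_combination hK - ha
        | linear_combination ha - hK
        | linear_combination he1
        | linear_combination -he1
end
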